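/- For 0 < k < 1, the function u ↦ dn²(u,k)·Θ⁴(u,k) is strictly monotone increasing on [0, K/2], where K = K(k) and Θ is Jacobi's theta function. Equivalently, the function g(u) = 2·zn(u) − k²·sn(u)·cn(u)/dn(u) is positive on (0, K/2), where zn = Θ'/Θ is Jacobi's zeta function. -/

import Mathlib

open Real intervalIntegral

/-- Complete elliptic integral of the first kind. -/
noncomputable def ellK (k : ℝ) : ℝ :=
  ∫ θ in (0:ℝ)..(π/2), 1 / Real.sqrt (1 - k^2 * (Real.sin θ)^2)

/-- Complete elliptic integral of the second kind. -/
noncomputable def ellE (k : ℝ) : ℝ :=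
  ∫ θ in (0:ℝ)..(π/2), Real.sqrt (1 - k^2 * (Real.sin θ)^2)

open Set Filter

/-!
Write `k' = √(1 - k²)` and `g = 2 zn - k² sn cn / dn`. Since `Θ' = zn Θ`, the derivative of
`dn² Θ⁴` is `2 dn² Θ⁴ g`, so both claims reduce to `g > 0` on `(0, K/2)`. From
`(k² sn cn / dn)' = dn² - k'² / dn²` we get `g' = dn² + k'² / dn² - 2E/K`; on `[0, K/2]` the
function `dn²` decreases from `1` to `k'` and `t ↦ t + k'² / t` increases on `[k', ∞)`, so `g` is
strictly concave there. It vanishes at `0`, and at `K/2` because `dn u · dn (K - u) = k'` turns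
`∫₀^{K/2} k'² / dn²` into `∫_{K/2}^K dn²` while `∫₀^K dn² = E`.

The properties of `sn, cn, dn` used here follow from uniqueness for their ODE system (Grönwall):
the system is also solved by `(sin am, cos am, √(1 - k² sin² am))`, with `am` inverse to
`F(θ) = ∫₀^θ (1 - k² sin² t)^(-1/2) dt`, and by the reflected triple `(cd, k' sd, k' nd)(K - u)`.
-/

theorem nonpos_of_hasDerivAt_le_mul_self {W W' : ℝ → ℝ} {L : ℝ}
    (hW : ∀ u, HasDerivAt W (W' u) u) (hle : ∀ u, W' u ≤ L * W u) (h0 : W 0 ≤ 0)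
    {u : ℝ} (hu : 0 ≤ u) : W u ≤ 0 := by
  have hcont : Continuous W := continuous_iff_continuousAt.2 fun x => (hW x).continuousAt
  simpa [gronwallBound_ε0_δ0] using le_gronwallBound_of_liminf_deriv_right_le (δ := 0) (ε := 0)
    hcont.continuousOn (fun x _ r hr => (hW x).hasDerivWithinAt.liminf_right_slope_le hr) h0
    (fun x _ => by simpa using hle x) u ⟨hu, le_rfl⟩

theorem surjective_of_hasDerivAt_one_le {f f' : ℝ → ℝ} (hf : ∀ x, HasDerivAt f (f' x) x)
    (hf' : ∀ x, 1 ≤ f' x) : Function.Surjective f := by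
  have hmono : Monotone fun x => f x - x := by
    refine monotone_of_deriv_nonneg (fun x => ((hf x).fun_sub (hasDerivAt_id' x)).differentiableAt)
      fun x => ?_
    rw [((hf x).fun_sub (hasDerivAt_id' x)).deriv]
    linarith [hf' x]
  refine Continuous.surjective (continuous_iff_continuousAt.2 fun x => (hf x).continuousAt) ?_ ?_
  · refine tendsto_atTop_mono' _ ?_ (tendsto_atTop_add_const_right _ (f 0) tendsto_id)
    filter_upwards [eventually_ge_atTop 0] with x hx
    have := hmono hx
    simp only [sub_zero, id] at this ⊢
    linarith
  · refine tendsto_atBot_mono' _ ?_ (tendsto_atBot_add_const_right _ (f 0) tendsto_id)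
    filter_upwards [eventually_le_atBot 0] with x hx
    have := hmono hx
    simp only [sub_zero, id] at this ⊢
    linarith

theorem strictMonoOn_add_sq_div {a : ℝ} (ha : 0 < a) :
    StrictMonoOn (fun t => t + a ^ 2 / t) (Ici a) := by
  intro x hx y hy hxy
  have hx0 : 0 < x := ha.trans_le hx
  have hy0 : 0 < y := hx0.trans hxy
  have hprod : a ^ 2 < x * y := by nlinarith [mem_Ici.1 hx]
  have key : y + a ^ 2 / y - (x + a ^ 2 / x) = (y - x) * (x * y - a ^ 2) / (x * y) := by
    field_simp
    ring
  have := div_pos (mul_pos (sub_pos.2 hxy) (sub_pos.2 hprod)) (mul_pos hx0 hy0)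
  simp only
  linarith

structure IsJacobiSolution (m : ℝ) (s c d : ℝ → ℝ) : Prop where
  hasDerivAt_s : ∀ u, HasDerivAt s (c u * d u) u
  hasDerivAt_c : ∀ u, HasDerivAt c (-(s u * d u)) u
  hasDerivAt_d : ∀ u, HasDerivAt d (-(m * s u * c u)) u

namespace IsJacobiSolution

variable {m : ℝ} {s c d : ℝ → ℝ}

theorem continuous_d (h : IsJacobiSolution m s c d) : Continuous d :=
  continuous_iff_continuousAt.2 fun u => (h.hasDerivAt_d u).continuousAt

theorem sq_add_sq (h : IsJacobiSolution m s c d) (u : ℝ) :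
    s u ^ 2 + c u ^ 2 = s 0 ^ 2 + c 0 ^ 2 := by
  have hder : ∀ x, HasDerivAt (fun u => s u ^ 2 + c u ^ 2) 0 x := fun x => by
    refine (((h.hasDerivAt_s x).fun_pow 2).fun_add ((h.hasDerivAt_c x).fun_pow 2)).congr_deriv ?_
    push_cast
    ring
  exact is_const_of_deriv_eq_zero (fun x => (hder x).differentiableAt) (fun x => (hder x).deriv) u 0

theorem mul_sq_add_sq (h : IsJacobiSolution m s c d) (u : ℝ) :
    m * s u ^ 2 + d u ^ 2 = m * s 0 ^ 2 + d 0 ^ 2 := by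
  have hder : ∀ x, HasDerivAt (fun u => m * s u ^ 2 + d u ^ 2) 0 x := fun x => by
    refine ((((h.hasDerivAt_s x).fun_pow 2).const_mul m).fun_add
      ((h.hasDerivAt_d x).fun_pow 2)).congr_deriv ?_
    push_cast
    ring
  exact is_const_of_deriv_eq_zero (fun x => (hder x).differentiableAt) (fun x => (hder x).deriv) u 0

private theorem two_mul_mul_le_of_abs_le {a N x y : ℝ} (h : |a| ≤ N) :
    2 * (a * x * y) ≤ N * (x ^ 2 + y ^ 2) := by
  obtain ⟨h₁, h₂⟩ := abs_le.1 h
  nlinarith [mul_nonneg (sub_nonneg.2 h₂) (sq_nonneg (x + y)),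
    mul_nonneg (neg_le_iff_add_nonneg.1 h₁) (sq_nonneg (x - y))]

/-- In the derivative of the squared distance `W`, the factors `d`, `d'` occur only as a difference
and the other factors are bounded by the conserved `s ^ 2 + c ^ 2`; so `W' ≤ L W`, and Grönwall
forces `W = 0`. -/
theorem eq_of_eq_at_zero (h : IsJacobiSolution m s c d) {s' c' d' : ℝ → ℝ}
    (h' : IsJacobiSolution m s' c' d') (hs : s 0 = s' 0) (hc : c 0 = c' 0) (hd : d 0 = d' 0)
    {u : ℝ} (hu : 0 ≤ u) : s u = s' u ∧ c u = c' u ∧ d u = d' u := by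
  set M := √(s 0 ^ 2 + c 0 ^ 2)
  have hs_le : ∀ x, |s x| ≤ M := fun x =>
    abs_le_sqrt (by nlinarith [h.sq_add_sq x, sq_nonneg (c x)])
  have hc_le : ∀ x, |c x| ≤ M := fun x =>
    abs_le_sqrt (by nlinarith [h.sq_add_sq x, sq_nonneg (s x)])
  have hc'_le : ∀ x, |c' x| ≤ M := fun x =>
    abs_le_sqrt (by rw [hs, hc]; nlinarith [h'.sq_add_sq x, sq_nonneg (s' x)])
  set W := fun x => (s x - s' x) ^ 2 + (c x - c' x) ^ 2 + (d x - d' x) ^ 2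
  have hW : ∀ x, HasDerivAt W (2 * ((c x - m * c' x) * (s x - s' x) * (d x - d' x))
      - 2 * ((1 + m) * s x * (c x - c' x) * (d x - d' x))) x := fun x => by
    refine (((((h.hasDerivAt_s x).fun_sub (h'.hasDerivAt_s x)).fun_pow 2).fun_add
      (((h.hasDerivAt_c x).fun_sub (h'.hasDerivAt_c x)).fun_pow 2)).fun_add
      (((h.hasDerivAt_d x).fun_sub (h'.hasDerivAt_d x)).fun_pow 2)).congr_deriv ?_
    push_cast
    ring
  have hle : ∀ x, 2 * ((c x - m * c' x) * (s x - s' x) * (d x - d' x))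
      - 2 * ((1 + m) * s x * (c x - c' x) * (d x - d' x)) ≤ 2 * ((1 + |m|) * M) * W x := by
    intro x
    have hA : |c x - m * c' x| ≤ (1 + |m|) * M := by
      calc |c x - m * c' x| ≤ |c x| + |m| * |c' x| := by rw [← abs_mul]; exact abs_sub _ _
        _ ≤ (1 + |m|) * M := by nlinarith [hc_le x, hc'_le x, abs_nonneg m]
    have hB : |-((1 + m) * s x)| ≤ (1 + |m|) * M := by
      rw [abs_neg, abs_mul]
      exact mul_le_mul (by simpa using abs_add_le 1 m) (hs_le x) (abs_nonneg _)
        (by positivity)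
    have h₁ := two_mul_mul_le_of_abs_le (x := s x - s' x) (y := d x - d' x) hA
    have h₂ := two_mul_mul_le_of_abs_le (x := c x - c' x) (y := d x - d' x) hB
    have hN : 0 ≤ (1 + |m|) * M := by positivity
    simp only [W]
    nlinarith [mul_nonneg hN (sq_nonneg (d x - d' x))]
  have hW0 : W u ≤ 0 := nonpos_of_hasDerivAt_le_mul_self hW hle (by simp [W, hs, hc, hd]) hu
  simp only [W] at hW0
  refine ⟨?_, ?_, ?_⟩ <;> nlinarith [sq_nonneg (s u - s' u), sq_nonneg (c u - c' u),
    sq_nonneg (d u - d' u)]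

end IsJacobiSolution

structure IsJacobiElliptic (k : ℝ) (sn cn dn : ℝ → ℝ) : Prop
    extends IsJacobiSolution (k ^ 2) sn cn dn where
  sn_zero : sn 0 = 0
  cn_zero : cn 0 = 1
  dn_zero : dn 0 = 1

section Amplitude

variable {k : ℝ}

theorem one_sub_sq_mul_sin_sq_pos (hk : k ^ 2 < 1) (θ : ℝ) : 0 < 1 - k ^ 2 * sin θ ^ 2 := by
  nlinarith [mul_nonneg (sq_nonneg k) (sub_nonneg.2 (sin_sq_le_one θ))]

noncomputable def ellF (k θ : ℝ) : ℝ :=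
  ∫ t in (0:ℝ)..θ, 1 / √(1 - k ^ 2 * sin t ^ 2)

theorem ellF_zero : ellF k 0 = 0 := integral_same

theorem ellF_pi_div_two : ellF k (π / 2) = ellK k := rfl

theorem continuous_one_div_sqrt_one_sub_sq_mul_sin_sq (hk : k ^ 2 < 1) :
    Continuous fun θ => 1 / √(1 - k ^ 2 * sin θ ^ 2) :=
  continuous_const.div (by fun_prop) fun θ => (sqrt_pos.2 (one_sub_sq_mul_sin_sq_pos hk θ)).ne'

theorem one_le_one_div_sqrt_one_sub_sq_mul_sin_sq (hk : k ^ 2 < 1) (θ : ℝ) :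
    1 ≤ 1 / √(1 - k ^ 2 * sin θ ^ 2) := by
  rw [le_div_iff₀ (sqrt_pos.2 (one_sub_sq_mul_sin_sq_pos hk θ)), one_mul, sqrt_le_one]
  nlinarith [sq_nonneg (k * sin θ)]

theorem hasDerivAt_ellF (hk : k ^ 2 < 1) (θ : ℝ) :
    HasDerivAt (ellF k) (1 / √(1 - k ^ 2 * sin θ ^ 2)) θ :=
  have hcont := continuous_one_div_sqrt_one_sub_sq_mul_sin_sq hk
  integral_hasDerivAt_right (hcont.intervalIntegrable _ _) (hcont.stronglyMeasurableAtFilter _ _)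
    hcont.continuousAt

theorem strictMono_ellF (hk : k ^ 2 < 1) : StrictMono (ellF k) :=
  strictMono_of_deriv_pos fun θ => (hasDerivAt_ellF hk θ).deriv ▸
    one_pos.trans_le (one_le_one_div_sqrt_one_sub_sq_mul_sin_sq hk θ)

theorem ellK_pos (hk : k ^ 2 < 1) : 0 < ellK k := by
  rw [← ellF_pi_div_two, ← ellF_zero (k := k)]
  exact strictMono_ellF hk (by positivity)

noncomputable def am (hk : k ^ 2 < 1) : ℝ ≃o ℝ :=
  (StrictMono.orderIsoOfSurjective (ellF k) (strictMono_ellF hk)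
    (surjective_of_hasDerivAt_one_le (hasDerivAt_ellF hk)
      (one_le_one_div_sqrt_one_sub_sq_mul_sin_sq hk))).symm

theorem ellF_am (hk : k ^ 2 < 1) (u : ℝ) : ellF k (am hk u) = u :=
  (am hk).symm_apply_apply u

theorem am_ellF (hk : k ^ 2 < 1) (θ : ℝ) : am hk (ellF k θ) = θ :=
  (am hk).apply_symm_apply θ

theorem am_zero (hk : k ^ 2 < 1) : am hk 0 = 0 := by
  simpa [ellF_zero] using am_ellF hk 0

theorem am_ellK (hk : k ^ 2 < 1) : am hk (ellK k) = π / 2 := am_ellF hk (π / 2)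

theorem am_mem_Ioo (hk : k ^ 2 < 1) {u : ℝ} (hu : u ∈ Ioo 0 (ellK k)) :
    am hk u ∈ Ioo 0 (π / 2) := by
  rw [← am_zero hk, ← am_ellK hk]
  exact ⟨(am hk).strictMono hu.1, (am hk).strictMono hu.2⟩

theorem hasDerivAt_am (hk : k ^ 2 < 1) (u : ℝ) :
    HasDerivAt (am hk) (√(1 - k ^ 2 * sin (am hk u) ^ 2)) u := by
  simpa using (hasDerivAt_ellF hk (am hk u)).of_local_left_inverse
    (am hk).continuous.continuousAt
    (one_pos.trans_le (one_le_one_div_sqrt_one_sub_sq_mul_sin_sq hk _)).ne'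
    (Eventually.of_forall (ellF_am hk))

theorem isJacobiElliptic_am (hk : k ^ 2 < 1) :
    IsJacobiElliptic k (fun u => sin (am hk u)) (fun u => cos (am hk u))
      (fun u => √(1 - k ^ 2 * sin (am hk u) ^ 2)) where
  hasDerivAt_s u := (hasDerivAt_sin _).comp u (hasDerivAt_am hk u)
  hasDerivAt_c u := by
    refine ((hasDerivAt_cos _).comp u (hasDerivAt_am hk u)).congr_deriv ?_
    ring
  hasDerivAt_d u := by
    have hs : HasDerivAt (fun u => sin (am hk u)) _ u :=
      (hasDerivAt_sin _).comp u (hasDerivAt_am hk u)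
    refine (((hs.fun_pow 2).const_mul (k ^ 2)).const_sub 1).sqrt
      (one_sub_sq_mul_sin_sq_pos hk _).ne' |>.congr_deriv ?_
    field_simp [(sqrt_pos.2 (one_sub_sq_mul_sin_sq_pos hk (am hk u))).ne']
    push_cast
    ring
  sn_zero := by simp [am_zero]
  cn_zero := by simp [am_zero]
  dn_zero := by simp [am_zero]

end Amplitude

noncomputable def zn (k : ℝ) (dn : ℝ → ℝ) (u : ℝ) : ℝ :=
  (∫ v in (0:ℝ)..u, dn v ^ 2) - u * ellE k / ellK k

theorem zn_zero (k : ℝ) (dn : ℝ → ℝ) : zn k dn 0 = 0 := by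
  simp [zn]

theorem hasDerivAt_zn {k : ℝ} {dn : ℝ → ℝ} (hdn : Continuous dn) (u : ℝ) :
    HasDerivAt (zn k dn) (dn u ^ 2 - ellE k / ellK k) u := by
  have hdn2 : Continuous fun v => dn v ^ 2 := by fun_prop
  refine (integral_hasDerivAt_right (hdn2.intervalIntegrable _ _)
    (hdn2.stronglyMeasurableAtFilter _ _) hdn2.continuousAt).sub
    (((hasDerivAt_id' u).mul_const (ellE k)).div_const (ellK k)) |>.congr_deriv ?_
  rw [one_mul]

namespace IsJacobiElliptic

variable {k : ℝ} {sn cn dn : ℝ → ℝ}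

theorem sn_sq_add_cn_sq (J : IsJacobiElliptic k sn cn dn) (u : ℝ) : sn u ^ 2 + cn u ^ 2 = 1 := by
  simpa [J.sn_zero, J.cn_zero] using J.sq_add_sq u

theorem sq_mul_sn_sq_add_dn_sq (J : IsJacobiElliptic k sn cn dn) (u : ℝ) :
    k ^ 2 * sn u ^ 2 + dn u ^ 2 = 1 := by
  simpa [J.sn_zero, J.dn_zero] using J.mul_sq_add_sq u

theorem dn_ne_zero (J : IsJacobiElliptic k sn cn dn) (hk : k ^ 2 < 1) (u : ℝ) : dn u ≠ 0 := by
  intro h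
  nlinarith [J.sq_mul_sn_sq_add_dn_sq u, J.sn_sq_add_cn_sq u,
    mul_nonneg (sq_nonneg k) (sq_nonneg (cn u))]

theorem dn_pos (J : IsJacobiElliptic k sn cn dn) (hk : k ^ 2 < 1) (u : ℝ) : 0 < dn u := by
  by_contra! h
  obtain ⟨x, -, hx⟩ := intermediate_value_uIcc J.continuous_d.continuousOn
    (show (0 : ℝ) ∈ uIcc (dn u) (dn 0) by rw [J.dn_zero]; exact ⟨by simp [h], by simp⟩)
  exact J.dn_ne_zero hk x hx

theorem eq_am (J : IsJacobiElliptic k sn cn dn) (hk : k ^ 2 < 1) {u : ℝ} (hu : 0 ≤ u) :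
    sn u = sin (am hk u) ∧ cn u = cos (am hk u) ∧ dn u = √(1 - k ^ 2 * sin (am hk u) ^ 2) :=
  have A := isJacobiElliptic_am hk
  J.eq_of_eq_at_zero A.toIsJacobiSolution (J.sn_zero.trans A.sn_zero.symm)
    (J.cn_zero.trans A.cn_zero.symm) (J.dn_zero.trans A.dn_zero.symm) hu

theorem sn_ellK (J : IsJacobiElliptic k sn cn dn) (hk : k ^ 2 < 1) : sn (ellK k) = 1 := by
  rw [(J.eq_am hk (ellK_pos hk).le).1, am_ellK, sin_pi_div_two]

theorem cn_ellK (J : IsJacobiElliptic k sn cn dn) (hk : k ^ 2 < 1) : cn (ellK k) = 0 := by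
  rw [(J.eq_am hk (ellK_pos hk).le).2.1, am_ellK, cos_pi_div_two]

theorem dn_ellK (J : IsJacobiElliptic k sn cn dn) (hk : k ^ 2 < 1) :
    dn (ellK k) = √(1 - k ^ 2) := by
  rw [(J.eq_am hk (ellK_pos hk).le).2.2, am_ellK, sin_pi_div_two, one_pow, mul_one]

/-- With `a = K` this is `(sn, cn, dn)` again, by the quarter-period formulas
`sn u = cd (K - u)`, `cn u = k' sd (K - u)`, `dn u = k' / dn (K - u)`. -/
theorem reflect (J : IsJacobiElliptic k sn cn dn) (hk : k ^ 2 < 1) (a : ℝ) :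
    IsJacobiSolution (k ^ 2) (fun u => cn (a - u) / dn (a - u))
      (fun u => √(1 - k ^ 2) * sn (a - u) / dn (a - u)) (fun u => √(1 - k ^ 2) / dn (a - u)) := by
  have hq : √(1 - k ^ 2) ^ 2 = 1 - k ^ 2 := sq_sqrt (by linarith)
  have hs u : HasDerivAt (fun x => sn (a - x)) (-(cn (a - u) * dn (a - u))) u :=
    (J.hasDerivAt_s (a - u)).comp_const_sub a u
  have hc u : HasDerivAt (fun x => cn (a - x)) (-(-(sn (a - u) * dn (a - u)))) u :=
    (J.hasDerivAt_c (a - u)).comp_const_sub a u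
  have hd u : HasDerivAt (fun x => dn (a - x)) (-(-(k ^ 2 * sn (a - u) * cn (a - u)))) u :=
    (J.hasDerivAt_d (a - u)).comp_const_sub a u
  refine ⟨fun u => ?_, fun u => ?_, fun u => ?_⟩
  · refine ((hc u).div (hd u) (J.dn_ne_zero hk _)).congr_deriv ?_
    field_simp [J.dn_ne_zero hk (a - u)]
    linear_combination sn (a - u) * J.sq_mul_sn_sq_add_dn_sq (a - u)
      - k ^ 2 * sn (a - u) * J.sn_sq_add_cn_sq (a - u) - sn (a - u) * hq
  · refine (((hs u).const_mul _).div (hd u) (J.dn_ne_zero hk _)).congr_deriv ?_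
    field_simp [J.dn_ne_zero hk (a - u)]
    linear_combination (-(√(1 - k ^ 2) * cn (a - u))) * J.sq_mul_sn_sq_add_dn_sq (a - u)
  · refine ((hasDerivAt_const u _).div (hd u) (J.dn_ne_zero hk _)).congr_deriv ?_
    field_simp [J.dn_ne_zero hk (a - u)]
    ring

theorem dn_mul_dn_ellK_sub (J : IsJacobiElliptic k sn cn dn) (hk : k ^ 2 < 1) {u : ℝ}
    (hu : 0 ≤ u) : dn u * dn (ellK k - u) = √(1 - k ^ 2) := by
  have hq : √(1 - k ^ 2) ≠ 0 := (sqrt_pos.2 (by linarith)).ne'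
  have := (J.eq_of_eq_at_zero (J.reflect hk (ellK k)) ?_ ?_ ?_ hu).2.2
  · rw [this, div_mul_cancel₀ _ (J.dn_ne_zero hk _)]
  · rw [sub_zero, J.sn_zero, J.cn_ellK hk, zero_div]
  · rw [sub_zero, J.cn_zero, J.sn_ellK hk, J.dn_ellK hk, mul_one, div_self hq]
  · rw [sub_zero, J.dn_zero, J.dn_ellK hk, div_self hq]

theorem dn_ellK_div_two_sq (J : IsJacobiElliptic k sn cn dn) (hk : k ^ 2 < 1) :
    dn (ellK k / 2) ^ 2 = √(1 - k ^ 2) := by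
  have := J.dn_mul_dn_ellK_sub hk (div_nonneg (ellK_pos hk).le zero_le_two)
  rwa [sub_half, ← sq] at this

theorem integral_dn_sq_ellK (J : IsJacobiElliptic k sn cn dn) (hk : k ^ 2 < 1) :
    ∫ u in (0:ℝ)..ellK k, dn u ^ 2 = ellE k := by
  have hsubst := integral_comp_mul_deriv (a := 0) (b := π / 2) (g := fun u => dn u ^ 2)
    (fun θ _ => hasDerivAt_ellF hk θ)
    (continuous_one_div_sqrt_one_sub_sq_mul_sin_sq hk).continuousOn (J.continuous_d.pow 2)
  rw [ellF_zero, ellF_pi_div_two] at hsubst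
  rw [← hsubst, ellE]
  refine integral_congr fun θ hθ => ?_
  rw [uIcc_of_le (by positivity)] at hθ
  have hF : 0 ≤ ellF k θ := ellF_zero (k := k) ▸ (strictMono_ellF hk).monotone hθ.1
  simp only [Function.comp_apply]
  rw [(J.eq_am hk hF).2.2, am_ellF, sq_sqrt (one_sub_sq_mul_sin_sq_pos hk θ).le, mul_one_div,
    div_sqrt]

theorem sn_pos (J : IsJacobiElliptic k sn cn dn) (hk : k ^ 2 < 1) {u : ℝ}
    (hu : u ∈ Ioo 0 (ellK k)) : 0 < sn u := by
  obtain ⟨h₀, h₁⟩ := am_mem_Ioo hk hu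
  rw [(J.eq_am hk hu.1.le).1]
  exact sin_pos_of_pos_of_lt_pi h₀ (by linarith [pi_pos])

theorem cn_pos (J : IsJacobiElliptic k sn cn dn) (hk : k ^ 2 < 1) {u : ℝ}
    (hu : u ∈ Ioo 0 (ellK k)) : 0 < cn u := by
  obtain ⟨h₀, h₁⟩ := am_mem_Ioo hk hu
  rw [(J.eq_am hk hu.1.le).2.1]
  exact cos_pos_of_mem_Ioo ⟨by linarith [pi_pos], h₁⟩

theorem strictAntiOn_dn (J : IsJacobiElliptic k sn cn dn) (hk : k ^ 2 < 1) (hk₀ : k ≠ 0) :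
    StrictAntiOn dn (Icc 0 (ellK k)) := by
  refine strictAntiOn_of_deriv_neg (convex_Icc _ _) J.continuous_d.continuousOn fun u hu => ?_
  rw [interior_Icc] at hu
  rw [(J.hasDerivAt_d u).deriv, neg_lt_zero]
  have := J.sn_pos hk hu
  have := J.cn_pos hk hu
  positivity

theorem sqrt_one_sub_sq_le_dn_sq (J : IsJacobiElliptic k sn cn dn) (hk : k ^ 2 < 1) (hk₀ : k ≠ 0)
    {u : ℝ} (hu : u ∈ Icc 0 (ellK k / 2)) : √(1 - k ^ 2) ≤ dn u ^ 2 := by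
  have hK := ellK_pos hk
  rw [← J.dn_ellK_div_two_sq hk]
  gcongr
  · exact (J.dn_pos hk _).le
  · exact (J.strictAntiOn_dn hk hk₀).antitoneOn ⟨hu.1, by linarith [hu.2]⟩
      ⟨by linarith, by linarith⟩ hu.2

theorem hasDerivAt_sq_mul_sn_mul_cn_div_dn (J : IsJacobiElliptic k sn cn dn) (hk : k ^ 2 < 1)
    (u : ℝ) : HasDerivAt (fun u => k ^ 2 * sn u * cn u / dn u)
      (dn u ^ 2 - (1 - k ^ 2) / dn u ^ 2) u := by
  refine ((((J.hasDerivAt_s u).const_mul (k ^ 2)).fun_mul (J.hasDerivAt_c u)).div (J.hasDerivAt_d u)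
    (J.dn_ne_zero hk u)).congr_deriv ?_
  field_simp [J.dn_ne_zero hk u]
  linear_combination (k ^ 2 * (k ^ 2 * sn u ^ 2 + dn u ^ 2)) * J.sn_sq_add_cn_sq u
    - (1 - k ^ 2 + k ^ 2 * sn u ^ 2 + dn u ^ 2) * J.sq_mul_sn_sq_add_dn_sq u

theorem two_mul_zn_ellK_div_two (J : IsJacobiElliptic k sn cn dn) (hk : k ^ 2 < 1) :
    2 * zn k dn (ellK k / 2)
      = k ^ 2 * sn (ellK k / 2) * cn (ellK k / 2) / dn (ellK k / 2) := by
  have hK := ellK_pos hk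
  have hdn2 : Continuous fun v => dn v ^ 2 := J.continuous_d.pow 2
  have hq2 : Continuous fun u => (1 - k ^ 2) / dn u ^ 2 :=
    continuous_const.div hdn2 fun u => pow_ne_zero 2 (J.dn_ne_zero hk u)
  have hψ := integral_eq_sub_of_hasDerivAt (a := 0) (b := ellK k / 2)
    (fun x _ => J.hasDerivAt_sq_mul_sn_mul_cn_div_dn hk x) ((hdn2.sub hq2).intervalIntegrable _ _)
  have hreflect : ∫ u in (0:ℝ)..ellK k / 2, (1 - k ^ 2) / dn u ^ 2
      = ∫ u in ellK k / 2..ellK k, dn u ^ 2 := by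
    have hsub := integral_comp_sub_left (a := 0) (b := ellK k / 2) (fun v => dn v ^ 2) (ellK k)
    rw [sub_half, sub_zero] at hsub
    rw [← hsub]
    refine integral_congr fun u hu => ?_
    rw [uIcc_of_le (by positivity)] at hu
    have h := J.dn_mul_dn_ellK_sub hk hu.1
    rw [← sq_sqrt (show 0 ≤ 1 - k ^ 2 by linarith), ← h]
    field_simp [J.dn_ne_zero hk u]
  have hsplit : (∫ u in (0:ℝ)..ellK k / 2, dn u ^ 2) + ∫ u in ellK k / 2..ellK k, dn u ^ 2
      = ellE k := by
    rw [integral_add_adjacent_intervals (hdn2.intervalIntegrable _ _)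
      (hdn2.intervalIntegrable _ _), J.integral_dn_sq_ellK hk]
  rw [integral_sub (hdn2.intervalIntegrable _ _) (hq2.intervalIntegrable _ _), hreflect] at hψ
  simp only [J.sn_zero, mul_zero, zero_mul, zero_div, sub_zero] at hψ
  rw [zn, ← hψ]
  field_simp
  linarith

theorem two_mul_zn_sub_pos (J : IsJacobiElliptic k sn cn dn) (hk : k ^ 2 < 1) (hk₀ : k ≠ 0)
    {u : ℝ} (hu : u ∈ Ioo 0 (ellK k / 2)) :
    0 < 2 * zn k dn u - k ^ 2 * sn u * cn u / dn u := by
  set g := fun u => 2 * zn k dn u - k ^ 2 * sn u * cn u / dn u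
  have hK := ellK_pos hk
  have hq : 0 < √(1 - k ^ 2) := sqrt_pos.2 (by linarith)
  have hg' (x : ℝ) : HasDerivAt g (dn x ^ 2 + (1 - k ^ 2) / dn x ^ 2 - 2 * (ellE k / ellK k)) x :=
    (((hasDerivAt_zn J.continuous_d x).const_mul 2).sub
      (J.hasDerivAt_sq_mul_sn_mul_cn_div_dn hk x)).congr_deriv (by ring)
  have hdn2 : StrictAntiOn (fun x => dn x ^ 2) (Icc 0 (ellK k / 2)) := fun x hx y hy hxy =>
    pow_lt_pow_left₀ ((J.strictAntiOn_dn hk hk₀).mono (Icc_subset_Icc_right (by linarith))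
      hx hy hxy) (J.dn_pos hk y).le two_ne_zero
  have hanti : StrictAntiOn (deriv g) (Icc 0 (ellK k / 2)) := by
    intro x hx y hy hxy
    have := (strictMonoOn_add_sq_div hq).comp_strictAntiOn hdn2
      (fun x hx => J.sqrt_one_sub_sq_le_dn_sq hk hk₀ hx) hx hy hxy
    simp only [Function.comp_apply, sq_sqrt (show 0 ≤ 1 - k ^ 2 by linarith)] at this
    rw [(hg' x).deriv, (hg' y).deriv]
    linarith
  have hconc : StrictConcaveOn ℝ (Icc 0 (ellK k / 2)) g :=
    hanti.mono interior_subset |>.strictConcaveOn_of_deriv (convex_Icc _ _)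
      (continuous_iff_continuousAt.2 fun x => (hg' x).continuousAt).continuousOn
  have h0 : g 0 = 0 := by simp [g, zn_zero, J.sn_zero]
  have hK2 : g (ellK k / 2) = 0 := by simp [g, J.two_mul_zn_ellK_div_two hk]
  have := hconc.lt_on_openSegment (left_mem_Icc.2 (by positivity))
    (right_mem_Icc.2 (by positivity)) (by positivity) (by rwa [openSegment_eq_Ioo (by positivity)])
  rwa [h0, hK2, min_self] at this

end IsJacobiElliptic

theorem dn_sq_theta_four_strictMono (k : ℝ) (hk0 : 0 < k) (hk1 : k < 1)
    (sn cn dn : ℝ → ℝ)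
    (hsn0 : sn 0 = 0) (hcn0 : cn 0 = 1) (hdn0 : dn 0 = 1)
    (hsn : ∀ u : ℝ, HasDerivAt sn (cn u * dn u) u)
    (hcn : ∀ u : ℝ, HasDerivAt cn (-(sn u * dn u)) u)
    (hdn : ∀ u : ℝ, HasDerivAt dn (-(k^2 * sn u * cn u)) u)
    (Θ : ℝ → ℝ) (hΘpos : ∀ u : ℝ, 0 < Θ u)
    (hΘ : ∀ u : ℝ, HasDerivAt Θ
      (((∫ v in (0:ℝ)..u, (dn v)^2) - u * ellE k / ellK k) * Θ u) u) :
    StrictMonoOn (fun u => (dn u)^2 * (Θ u)^4) (Set.Icc 0 (ellK k / 2)) ∧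
    ∀ u ∈ Set.Ioo 0 (ellK k / 2),
      0 < 2 * ((∫ v in (0:ℝ)..u, (dn v)^2) - u * ellE k / ellK k)
        - k^2 * sn u * cn u / dn u := by
  have J : IsJacobiElliptic k sn cn dn := ⟨⟨hsn, hcn, hdn⟩, hsn0, hcn0, hdn0⟩
  have hk : k ^ 2 < 1 := by nlinarith
  have hg (u) (hu : u ∈ Ioo 0 (ellK k / 2)) := J.two_mul_zn_sub_pos hk hk0.ne' hu
  have hΘc : Continuous Θ := continuous_iff_continuousAt.2 fun u => (hΘ u).continuousAt
  refine ⟨strictMonoOn_of_deriv_pos (convex_Icc _ _)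
    ((J.continuous_d.pow 2).mul (hΘc.pow 4)).continuousOn fun u hu => ?_, hg⟩
  rw [interior_Icc] at hu
  have hD : HasDerivAt (fun u => dn u ^ 2 * Θ u ^ 4)
      (2 * dn u ^ 2 * Θ u ^ 4 * (2 * zn k dn u - k ^ 2 * sn u * cn u / dn u)) u :=
    ((hdn u).fun_pow 2).fun_mul ((hΘ u).fun_pow 4) |>.congr_deriv <| by
      field_simp [J.dn_ne_zero hk u]
      simp only [zn]
      ring
  rw [hD.deriv]
  have := J.dn_pos hk u
  have := hΘpos u
  exact mul_pos (by positivity) (hg u hu)
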